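/- arXiv:1506.00149 — 2 statements merged into one kernel-verified Lean document; each statement's English description precedes it below -/
import Mathlib

section
/- Let m = p_1^{α_1} ··· p_ℓ^{α_ℓ} divide n, and let ν(m) = max_i p_i^{α_i}. A function f : ℤ/nℤ → ℤ/mℤ is congruence preserving if and only if there exist integers a_0, ..., a_{ν(m)-1} with lcm(1,...,k) dividing a_k for each k, such that f(x) = Σ_{k=0}^{ν(m)-1} (a_k mod m) · (C(ι_n(x), k) mod m) for all x ∈ ℤ/nℤ. -/
/-- `lcm(1, 2, ..., k)`, with `lcmUpTo 0 = 1` by convention. -/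
def lcmUpTo (k : ℕ) : ℕ := (Finset.Icc 1 k).lcm id

/-- `ν(m) = max_i p_i^{α_i}` where `m = p_1^{α_1} ⋯ p_ℓ^{α_ℓ}`. -/
def nu (m : ℕ) : ℕ := m.primeFactors.sup fun p => p ^ m.factorization p

/-! Newton's formula expands `g : ℕ → ℤ/m` as `g x = ∑ₖ Δᵏg(0) · C(x, k)`. If `g` is congruence
preserving then so is `Δg`, and `Δ^q g(0) = ∑ᵢ ±C(q, i) (g i - g 0)` is divisible by `q` because
`q ∣ i · C(q, i)`; hence every `q ≤ k`, and therefore `lcm(1, …, k)`, divides `Δᵏg(0)`. Since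
`m ∣ lcm(1, …, ν(m))`, the terms with `k ≥ ν(m)` vanish. Conversely, Vandermonde's identity shows
that `x - y` divides `lcm(1, …, k) · (C(x, k) - C(y, k))`. -/

open Finset fwdDiff

theorem Nat.dvd_choose_mul (n k : ℕ) : n ∣ n.choose k * k := by
  rcases n with _ | n
  · rcases k with _ | k <;> simp
  · rcases k with _ | k
    · simp
    · exact Dvd.intro _ (Nat.add_one_mul_choose_eq n k)

theorem dvd_lcmUpTo {j k : ℕ} (h1 : 1 ≤ j) (h2 : j ≤ k) : j ∣ lcmUpTo k :=
  Finset.dvd_lcm (mem_Icc.mpr ⟨h1, h2⟩)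

theorem lcmUpTo_succ (k : ℕ) : lcmUpTo (k + 1) = Nat.lcm (k + 1) (lcmUpTo k) := by
  rw [lcmUpTo, lcmUpTo, ← insert_Icc_right_eq_Icc_add_one (by omega), lcm_insert]
  rfl

theorem dvd_lcmUpTo_of_nu_le {m k : ℕ} (hm : m ≠ 0) (hk : nu m ≤ k) : m ∣ lcmUpTo k := by
  refine (Nat.dvd_iff_prime_pow_dvd_dvd _ _).mpr fun p c hp hpc => ?_
  rcases Nat.eq_zero_or_pos c with rfl | hc
  · simp
  have hp_mem : p ∈ m.primeFactors :=
    Nat.mem_primeFactors.mpr ⟨hp, (dvd_pow_self p hc.ne').trans hpc, hm⟩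
  have hc_le : c ≤ m.factorization p := (hp.pow_dvd_iff_le_factorization hm).mp hpc
  refine dvd_lcmUpTo (Nat.one_le_pow _ _ hp.pos) ?_
  calc p ^ c ≤ p ^ m.factorization p := Nat.pow_le_pow_right hp.pos hc_le
    _ ≤ nu m := le_sup (f := fun q => q ^ m.factorization q) hp_mem
    _ ≤ k := hk

/-- Holds in every commutative ring, by Bézout for the coprime `a / gcd a b` and `b / gcd a b`. -/
theorem natCast_lcm_dvd {R : Type*} [CommRing R] {a b : ℕ} {x : R}
    (ha : (a : R) ∣ x) (hb : (b : R) ∣ x) : (a.lcm b : R) ∣ x := by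
  obtain ⟨a', b', hcop, ha', hb'⟩ := Nat.exists_coprime a b
  set g := a.gcd b
  obtain ⟨u, v, huv⟩ := Nat.isCoprime_iff_coprime.mpr hcop
  have hlcm : a.lcm b = a' * b' * g := by
    conv_lhs => rw [ha', hb']
    rw [Nat.lcm_mul_right, hcop.lcm_eq_mul]
  obtain ⟨y, hy⟩ := ha
  obtain ⟨z, hz⟩ := hb
  rw [ha'] at hy
  rw [hb'] at hz
  push_cast at hy hz
  refine ⟨u * z + v * y, ?_⟩
  calc x = x * ((u * a' + v * b' : ℤ) : R) := by rw [huv, Int.cast_one, mul_one]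
    _ = _ := by rw [hlcm]; push_cast; linear_combination (u * a' : R) * hz + (v * b' : R) * hy

theorem natCast_lcmUpTo_dvd {R : Type*} [CommRing R] {x : R} {k : ℕ}
    (h : ∀ q, 1 ≤ q → q ≤ k → (q : R) ∣ x) : (lcmUpTo k : R) ∣ x := by
  induction k with
  | zero => simp [lcmUpTo]
  | succ k ih =>
    rw [lcmUpTo_succ]
    exact natCast_lcm_dvd (h _ (by omega) le_rfl) (ih fun q h1 h2 => h q h1 (by omega))

theorem ZMod.exists_intCast_eq_of_natCast_dvd {m l : ℕ} {z : ZMod m} (h : (l : ZMod m) ∣ z) :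
    ∃ a : ℤ, (l : ℤ) ∣ a ∧ (a : ZMod m) = z := by
  obtain ⟨w, rfl⟩ := h
  exact ⟨l * w.cast, dvd_mul_right _ _, by push_cast [ZMod.intCast_zmod_cast]; rfl⟩

/-- The condition `x - y ∣ g x - g y` for sequences, written with `x = a + d`, `y = a`. -/
def IsCongruencePreserving {R : Type*} [CommRing R] (g : ℕ → R) : Prop :=
  ∀ a d : ℕ, (d : R) ∣ g (a + d) - g a

namespace IsCongruencePreserving

variable {R : Type*} [CommRing R] {g : ℕ → R}

theorem sum {ι : Type*} {s : Finset ι} {f : ι → ℕ → R}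
    (hf : ∀ k ∈ s, IsCongruencePreserving (f k)) :
    IsCongruencePreserving fun i => ∑ k ∈ s, f k i := fun a d => by
  rw [← sum_sub_distrib]
  exact dvd_sum fun k hk => hf k hk a d

theorem fwdDiff (hg : IsCongruencePreserving g) : IsCongruencePreserving (Δ_[1] g) := fun a d => by
  have h : Δ_[1] g (a + d) - Δ_[1] g a = (g (a + 1 + d) - g (a + 1)) - (g (a + d) - g a) := by
    simp only [_root_.fwdDiff, add_right_comm a d 1]
    ring
  rw [h]
  exact dvd_sub (hg _ d) (hg a d)

theorem iterate_fwdDiff (hg : IsCongruencePreserving g) (k : ℕ) :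
    IsCongruencePreserving (Δ_[1] ^[k] g) := by
  induction k generalizing g with
  | zero => exact hg
  | succ k ih => exact Function.iterate_succ_apply _ k g ▸ ih hg.fwdDiff

/-- `Δ^q` kills constants, and `q ∣ C(q, i) * i` absorbs the factor `i ∣ g i - g 0`. -/
theorem natCast_dvd_fwdDiff_iter_self (hg : IsCongruencePreserving g) {q : ℕ} (hq : q ≠ 0) :
    (q : R) ∣ Δ_[1] ^[q] g 0 := by
  have hconst : Δ_[1] ^[q] g = Δ_[1] ^[q] (fun i => g i - g 0) := by
    obtain ⟨r, rfl⟩ := Nat.exists_eq_add_one_of_ne_zero hq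
    rw [show (fun i => g i - g 0) = g + fun _ => -g 0 by ext; simp [sub_eq_add_neg],
      fwdDiff_iter_add, Function.iterate_succ_apply _ r (fun _ => -g 0), fwdDiff_const,
      Function.iterate_fixed (fwdDiff_const 1 (0 : R))]
    exact (add_zero _).symm
  rw [hconst, fwdDiff_iter_eq_sum_shift]
  refine dvd_sum fun i _ => ?_
  obtain ⟨w, hw⟩ := hg 0 i
  simp only [zero_add, smul_eq_mul, mul_one, zsmul_eq_mul] at hw ⊢
  rw [hw, show ((((-1) ^ (q - i) * q.choose i : ℤ)) : R) * (i * w)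
      = (-1) ^ (q - i) * (((q.choose i * i : ℕ) : R) * w) by push_cast; ring]
  exact ((Nat.cast_dvd_cast (Nat.dvd_choose_mul q i)).mul_right w).mul_left _

theorem natCast_dvd_fwdDiff_iter (hg : IsCongruencePreserving g) {q k : ℕ} (hq : q ≠ 0)
    (hqk : q ≤ k) : (q : R) ∣ Δ_[1] ^[k] g 0 := by
  obtain ⟨r, rfl⟩ := Nat.exists_eq_add_of_le hqk
  rw [Function.iterate_add_apply]
  exact (hg.iterate_fwdDiff r).natCast_dvd_fwdDiff_iter_self hq

theorem natCast_lcmUpTo_dvd_fwdDiff_iter (hg : IsCongruencePreserving g) (k : ℕ) :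
    (lcmUpTo k : R) ∣ Δ_[1] ^[k] g 0 :=
  natCast_lcmUpTo_dvd fun _ hq hqk => hg.natCast_dvd_fwdDiff_iter (by omega) hqk

theorem fwdDiff_iter_eq_zero_of_nu_le {m : ℕ} (hm : m ≠ 0) {g : ℕ → ZMod m}
    (hg : IsCongruencePreserving g) {k : ℕ} (hk : nu m ≤ k) : Δ_[1] ^[k] g 0 = 0 := by
  have h := hg.natCast_lcmUpTo_dvd_fwdDiff_iter k
  rwa [(ZMod.natCast_eq_zero_iff _ _).mpr (dvd_lcmUpTo_of_nu_le hm hk), zero_dvd_iff] at h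

theorem eq_sum_range_nu {m : ℕ} (hm : m ≠ 0) {g : ℕ → ZMod m} (hg : IsCongruencePreserving g)
    (x : ℕ) : g x = ∑ k ∈ range (nu m), Δ_[1] ^[k] g 0 * (x.choose k : ZMod m) := by
  have hnewton := shift_eq_sum_fwdDiff_iter 1 g x 0
  rw [zero_add, smul_eq_mul, mul_one] at hnewton
  rw [hnewton, sum_subset (range_subset_range.mpr (Nat.le_add_left (x + 1) (nu m))),
    ← sum_subset (range_subset_range.mpr (Nat.le_add_right (nu m) (x + 1)))]
  · exact sum_congr rfl fun k _ => nsmul_eq_mul' _ _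
  · intro k _ hk
    rw [hg.fwdDiff_iter_eq_zero_of_nu_le hm (by simpa using hk), smul_zero]
  · intro k _ hk
    rw [Nat.choose_eq_zero_of_lt (by simpa using hk), zero_smul]

end IsCongruencePreserving

/-- Vandermonde: `C(a + d, k) - C(a, k) = ∑_{1 ≤ j ≤ k} C(d, j) C(a, k - j)`, and `d ∣ j C(d, j)`
with `j ∣ lcmUpTo k`. -/
theorem isCongruencePreserving_lcmUpTo_mul_choose (k : ℕ) :
    IsCongruencePreserving fun i : ℕ => (lcmUpTo k * i.choose k : ℤ) := fun a d => by
  have hvandermonde : (a + d).choose k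
      = a.choose k + ∑ j ∈ range k, d.choose (j + 1) * a.choose (k - (j + 1)) := by
    rw [add_comm a d, Nat.add_choose_eq,
      Nat.sum_antidiagonal_eq_sum_range_succ (fun i j => d.choose i * a.choose j), sum_range_succ',
      Nat.choose_zero_right, one_mul, Nat.sub_zero, add_comm]
  dsimp only
  have hdvd : d ∣ lcmUpTo k * ∑ j ∈ range k, d.choose (j + 1) * a.choose (k - (j + 1)) := by
    rw [mul_sum]
    refine dvd_sum fun j hj => ?_
    rw [← mul_assoc]
    refine (Nat.dvd_choose_mul d (j + 1)).trans (Dvd.dvd.mul_right ?_ _)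
    rw [mul_comm]
    exact mul_dvd_mul_right (dvd_lcmUpTo (by omega) (mem_range.mp hj)) _
  rw [hvandermonde, Nat.cast_add, mul_add, add_sub_cancel_left]
  exact_mod_cast hdvd

theorem isCongruencePreserving_intCast_mul_choose {R : Type*} [CommRing R] {c : ℤ} {k : ℕ}
    (hc : (lcmUpTo k : ℤ) ∣ c) :
    IsCongruencePreserving fun i : ℕ => (c : R) * (i.choose k : R) := fun a d => by
  obtain ⟨e, rfl⟩ := hc
  have h := map_dvd (Int.castRingHom R) (isCongruencePreserving_lcmUpTo_mul_choose k a d)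
  convert h.mul_left (e : R) using 1
  · simp
  · simp only [eq_intCast]
    push_cast
    ring

theorem isCongruencePreserving_comp_natCast {n m : ℕ} (hmn : m ∣ n) {f : ZMod n → ZMod m}
    (hf : ∀ x y : ZMod n, ZMod.castHom hmn (ZMod m) (x - y) ∣ f x - f y) :
    IsCongruencePreserving fun i : ℕ => f i := fun a d => by
  simpa using hf (a + d : ℕ) a

theorem IsCongruencePreserving.castHom_sub_dvd_comp_val {n m : ℕ} [NeZero n] (hmn : m ∣ n)
    {g : ℕ → ZMod m} (hg : IsCongruencePreserving g) (x y : ZMod n) :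
    ZMod.castHom hmn (ZMod m) (x - y) ∣ g x.val - g y.val := by
  wlog hxy : y.val ≤ x.val generalizing x y
  · rw [← neg_sub y x, map_neg, neg_dvd, ← neg_sub (g y.val), dvd_neg]
    exact this y x (le_of_not_ge hxy)
  obtain ⟨d, hd⟩ := Nat.exists_eq_add_of_le hxy
  have hcast : ZMod.castHom hmn (ZMod m) (x - y) = d := by
    rw [← ZMod.natCast_zmod_val x, ← ZMod.natCast_zmod_val y, hd, Nat.cast_add,
      add_sub_cancel_left, map_natCast]
  rw [hcast, hd]
  exact hg y.val d

theorem stmt_6 (n m : ℕ) (hn : 0 < n) (hm : 0 < m) (hmn : m ∣ n)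
    (f : ZMod n → ZMod m) :
    (∀ x y : ZMod n, ZMod.castHom hmn (ZMod m) (x - y) ∣ f x - f y) ↔
    ∃ a : ℕ → ℤ, (∀ k < nu m, (lcmUpTo k : ℤ) ∣ a k) ∧
      ∀ x : ZMod n,
        f x = ∑ k ∈ Finset.range (nu m),
          (a k : ZMod m) * ((x.val.choose k : ℕ) : ZMod m) := by
  have : NeZero n := ⟨hn.ne'⟩
  constructor
  · intro hf
    have hg := isCongruencePreserving_comp_natCast hmn hf
    choose a ha hD using fun k => ZMod.exists_intCast_eq_of_natCast_dvd
      (hg.natCast_lcmUpTo_dvd_fwdDiff_iter k)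
    refine ⟨a, fun k _ => ha k, fun x => ?_⟩
    conv_lhs => rw [← ZMod.natCast_zmod_val x]
    simp only [hg.eq_sum_range_nu hm.ne' x.val, hD]
  · rintro ⟨a, ha, hf⟩ x y
    have hG := IsCongruencePreserving.sum fun k hk =>
      isCongruencePreserving_intCast_mul_choose (R := ZMod m) (ha k (mem_range.mp hk))
    simpa only [hf] using hG.castHom_sub_dvd_comp_val hmn x y
end

section
/- Every congruence preserving function F : ℕ → ℤ extends uniquely to a congruence preserving function Φ : ℤ_p → ℤ_p. -/
/-!
In `ℤ_[p]` one has `a ∣ b ↔ ‖b‖ ≤ ‖a‖`, so the congruence preserving maps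
`ℤ_[p] → ℤ_[p]` are exactly the `1`-Lipschitz ones, and the hypothesis on `F` says that
`n ↦ F n` is `1`-Lipschitz on `ℕ ⊆ ℤ_[p]`. Since `ℕ` is dense in the complete space `ℤ_[p]`,
such a map extends uniquely to a `1`-Lipschitz map on `ℤ_[p]`.
-/

open Set NNReal

namespace DenseRange

variable {ι X Y : Type*} [PseudoMetricSpace X] {e : ι → X}

theorem lipschitzWith_of_forall_dist_le [PseudoMetricSpace Y] (he : DenseRange e) {g : X → Y}
    (hg : Continuous g) {K : ℝ≥0}
    (h : ∀ i j, dist (g (e i)) (g (e j)) ≤ K * dist (e i) (e j)) :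
    LipschitzWith K g :=
  LipschitzWith.of_dist_le_mul <|
    isClosed_property2 (p := fun x y => dist (g x) (g y) ≤ K * dist x y) he
      (isClosed_le (by fun_prop) (by fun_prop)) h

theorem existsUnique_lipschitzWith_extend [MetricSpace Y] [CompleteSpace Y] (he : DenseRange e)
    {f : ι → Y} {K : ℝ≥0} (hf : ∀ i j, dist (f i) (f j) ≤ K * dist (e i) (e j)) :
    ∃! g : X → Y, LipschitzWith K g ∧ ∀ i, g (e i) = f i := by
  have hf_eq : ∀ i j, e i = e j → f i = f j := fun i j h =>
    dist_le_zero.mp (by simpa [h] using hf i j)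
  let f' : range e → Y := f ∘ rangeSplitting e
  have hf' : LipschitzWith K f' := LipschitzWith.of_dist_le_mul fun a b => by
    simpa [f', Subtype.dist_eq, apply_rangeSplitting] using
      hf (rangeSplitting e a) (rangeSplitting e b)
  set g := Dense.extend he f'
  have hg_e : ∀ i, g (e i) = f i := fun i =>
    (Dense.extend_of_ind he hf'.uniformContinuous ⟨e i, mem_range_self i⟩).trans
      (hf_eq _ _ (apply_rangeSplitting e _))
  have hg_cont : Continuous g :=
    (Dense.uniformContinuous_extend he hf'.uniformContinuous).continuous
  have hg : LipschitzWith K g :=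
    he.lipschitzWith_of_forall_dist_le hg_cont fun i j => by simpa only [hg_e] using hf i j
  refine ⟨g, ⟨hg, hg_e⟩, fun ψ ⟨hψ, hψ_e⟩ => he.equalizer hψ.continuous hg_cont ?_⟩
  funext i
  simp only [Function.comp_apply, hψ_e, hg_e]

end DenseRange

namespace PadicInt

variable {p : ℕ} [Fact p.Prime]

theorem dvd_iff_norm_le {a b : ℤ_[p]} : a ∣ b ↔ ‖b‖ ≤ ‖a‖ := by
  constructor
  · rintro ⟨c, rfl⟩
    simpa [norm_mul] using mul_le_of_le_one_right (norm_nonneg a) (norm_le_one c)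
  · intro h
    rcases eq_or_ne a 0 with rfl | ha
    · simp_all
    have ha' : (a : ℚ_[p]) ≠ 0 := coe_ne_zero.mpr ha
    refine ⟨⟨(b : ℚ_[p]) / a, ?_⟩, Subtype.ext ?_⟩
    · rwa [norm_div, div_le_one (norm_pos_iff.mpr ha')]
    · change (b : ℚ_[p]) = a * (b / a)
      field_simp

theorem lipschitzWith_one_iff_forall_sub_dvd {Φ : ℤ_[p] → ℤ_[p]} :
    LipschitzWith 1 Φ ↔ ∀ x y, x - y ∣ Φ x - Φ y := by
  simp only [dvd_iff_norm_le, ← dist_eq_norm, lipschitzWith_iff_dist_le_mul, NNReal.coe_one,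
    one_mul]

end PadicInt

theorem stmt_12 (p : ℕ) [Fact p.Prime] (F : ℕ → ℤ)
    (hF : ∀ a b : ℕ, (a : ℤ) - b ∣ F a - F b) :
    ∃! Φ : ℤ_[p] → ℤ_[p],
      (∀ x y : ℤ_[p], x - y ∣ Φ x - Φ y) ∧
      ∀ a : ℕ, Φ (a : ℤ_[p]) = (F a : ℤ_[p]) := by
  simp_rw [← PadicInt.lipschitzWith_one_iff_forall_sub_dvd]
  refine PadicInt.denseRange_natCast.existsUnique_lipschitzWith_extend fun a b => ?_
  have hdvd : ((a - b : ℤ) : ℤ_[p]) ∣ ((F a - F b : ℤ) : ℤ_[p]) :=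
    Int.cast_dvd_cast _ _ (hF a b)
  push_cast at hdvd
  simpa [dist_eq_norm] using PadicInt.dvd_iff_norm_le.mp hdvd
end
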